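/- Quantified effect in the two-car model: the narrative σ3 = [hack C1, turn C1 I, hack C1, drive C2 I J, turn C1 I, hack C2, turn C2 J, drive C1 I J] is executable from the initial state T0 in which both cars are at I, uncorrupted and undamaged; the quantified effect Φ(s) := ∃ c c', c ≠ c' ∧ car c is damaged in s ∧ car c' is damaged in s is false after the first k actions for every k ≤ 6 and true after the first k actions for k = 7 and k = 8; and the set of achievement-cause indices of the causal setting with narrative σ3 started in T0 and effect Φ is exactly {0, 1, 3, 5, 6}, i.e. the causal chain is [turn C2 J after 6 actions, hack C2 after 5 actions, drive C2 I J after 3 actions, turn C1 I after 1 action, hack C1 in the initial situation]. -/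
import Mathlib


inductive Car : Type
  | C1 | C2
deriving DecidableEq

open Car

inductive Loc : Type
  | I | J | K
deriving DecidableEq

open Loc

def connected : Loc → Loc → Prop
  | I, J => True
  | J, I => True
  | J, K => True
  | K, J => True
  | _, _ => False

inductive Act2 : Type
  | drive (c : Car) (i j : Loc)
  | turn (c : Car) (i : Loc)
  | hack (c : Car)
deriving DecidableEq

open Act2

/-- A state records, for each car, its position, corrupted flag and damaged flag. -/
abbrev State2 : Type := Car → Loc × Bool × Bool

def step : Act2 → State2 → State2
  | drive c _ j, s => fun c' => if c' = c then (j, (s c).2.1, (s c).2.2) else s c'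
  | turn c _, s => fun c' =>
      if c' = c then ((s c).1, (s c).2.1, (s c).2.1 || (s c).2.2) else s c'
  | hack c, s => fun c' => if c' = c then ((s c).1, true, (s c).2.2) else s c'

def poss : Act2 → State2 → Prop
  | drive c i j, s => (s c).1 = i ∧ i ≠ j ∧ connected i j
  | turn c i, s => (s c).1 = i
  | hack _, _ => True

def run (l : List Act2) (s : State2) : State2 :=
  l.foldl (fun t a => step a t) s

def executable (l : List Act2) (s : State2) : Prop :=
  ∀ k : Fin l.length, poss (l.get k) (run (l.take k) s)

def σ3 : List Act2 :=
  [hack C1, turn C1 I, hack C1, drive C2 I J, turn C1 I, hack C2, turn C2 J, drive C1 I J]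

/-- Both cars at `I`, uncorrupted and undamaged. -/
def T0 : State2 := fun _ => (I, false, false)

/-- The quantified effect: (at least) two distinct cars are damaged. -/
def Φ (s : State2) : Prop := ∃ c c' : Car, c ≠ c' ∧ (s c).2.2 = true ∧ (s c').2.2 = true

def AchCause : List Act2 → State2 → (State2 → Prop) → ℕ → Prop
  | l, s0, φ, i =>
    ∃ j, ∃ _h1 : 1 ≤ j, ∃ _h2 : j ≤ l.length,
      ¬ φ (run (l.take (j - 1)) s0) ∧
      (∀ k, j ≤ k → k ≤ l.length → φ (run (l.take k) s0)) ∧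
      (i = j - 1 ∨
        AchCause (l.take (j - 1)) s0
          (fun s => φ (step (l.get ⟨j - 1, by omega⟩) s) ∧
            poss (l.get ⟨j - 1, by omega⟩) s) i)
  termination_by l _ _ _ => l.length
  decreasing_by simp [List.length_take]; omega

instance : ∀ i j, Decidable (connected i j) := fun i j => by
  cases i <;> cases j <;> simp only [connected] <;> infer_instance

instance : ∀ a s, Decidable (poss a s) := fun a s => by
  cases a <;> simp only [poss] <;> infer_instance

instance : Fintype Car := ⟨⟨{C1, C2}, by decide⟩, fun x => by cases x <;> decide⟩

instance : DecidablePred Φ := fun s => by unfold Φ; infer_instance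

abbrev ψ1 : State2 → Prop := fun s => Φ (step (turn C2 J) s) ∧ poss (turn C2 J) s
abbrev ψ2 : State2 → Prop := fun s => ψ1 (step (hack C2) s) ∧ poss (hack C2) s
abbrev ψ3 : State2 → Prop := fun s => ψ2 (step (drive C2 I J) s) ∧ poss (drive C2 I J) s
abbrev ψ4 : State2 → Prop := fun s => ψ3 (step (turn C1 I) s) ∧ poss (turn C1 I) s

def l1 : List Act2 := [hack C1, turn C1 I, hack C1, drive C2 I J, turn C1 I, hack C2]
def l2 : List Act2 := [hack C1, turn C1 I, hack C1, drive C2 I J, turn C1 I]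
def l3 : List Act2 := [hack C1, turn C1 I, hack C1]
def l4 : List Act2 := [hack C1]

lemma Lnil (s0 : State2) (φ : State2 → Prop) (i : ℕ) : ¬ AchCause [] s0 φ i := by
  intro h
  rw [AchCause] at h
  obtain ⟨j, h1, h2, -⟩ := h
  simp at h2; omega

lemma L0 (i : ℕ) : AchCause σ3 T0 Φ i ↔ (i = 6 ∨ AchCause l1 T0 ψ1 i) := by
  constructor
  · intro h
    rw [AchCause] at h
    obtain ⟨j, h1, h2, hnot, hall, hc⟩ := h
    have h2' : j ≤ 8 := h2
    have hj := hall j le_rfl h2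
    interval_cases j
    · exact absurd hj (by decide)
    · exact absurd hj (by decide)
    · exact absurd hj (by decide)
    · exact absurd hj (by decide)
    · exact absurd hj (by decide)
    · exact absurd hj (by decide)
    · exact hc
    · exact absurd (by decide) hnot
  · intro h
    rw [AchCause]
    refine ⟨7, by omega, by decide, by decide, ?_, ?_⟩
    · intro k hk1 hk2
      have hk2' : k ≤ 8 := hk2
      interval_cases k <;> decide
    · exact h

lemma L1 (i : ℕ) : AchCause l1 T0 ψ1 i ↔ (i = 5 ∨ AchCause l2 T0 ψ2 i) := by
  constructor
  · intro h
    rw [AchCause] at h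
    obtain ⟨j, h1, h2, hnot, hall, hc⟩ := h
    have h2' : j ≤ 6 := h2
    have hj := hall j le_rfl h2
    interval_cases j
    · exact absurd hj (by decide)
    · exact absurd hj (by decide)
    · exact absurd hj (by decide)
    · exact absurd hj (by decide)
    · exact absurd hj (by decide)
    · exact hc
  · intro h
    rw [AchCause]
    refine ⟨6, by omega, by decide, by decide, ?_, ?_⟩
    · intro k hk1 hk2
      have hk2' : k ≤ 6 := hk2
      interval_cases k <;> decide
    · exact h

lemma L2 (i : ℕ) : AchCause l2 T0 ψ2 i ↔ (i = 3 ∨ AchCause l3 T0 ψ3 i) := by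
  constructor
  · intro h
    rw [AchCause] at h
    obtain ⟨j, h1, h2, hnot, hall, hc⟩ := h
    have h2' : j ≤ 5 := h2
    have hj := hall j le_rfl h2
    interval_cases j
    · exact absurd hj (by decide)
    · exact absurd hj (by decide)
    · exact absurd hj (by decide)
    · exact hc
    · exact absurd (by decide) hnot
  · intro h
    rw [AchCause]
    refine ⟨4, by omega, by decide, by decide, ?_, ?_⟩
    · intro k hk1 hk2
      have hk2' : k ≤ 5 := hk2
      interval_cases k <;> decide
    · exact h

lemma L3 (i : ℕ) : AchCause l3 T0 ψ3 i ↔ (i = 1 ∨ AchCause l4 T0 ψ4 i) := by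
  constructor
  · intro h
    rw [AchCause] at h
    obtain ⟨j, h1, h2, hnot, hall, hc⟩ := h
    have h2' : j ≤ 3 := h2
    have hj := hall j le_rfl h2
    interval_cases j
    · exact absurd hj (by decide)
    · exact hc
    · exact absurd (by decide) hnot
  · intro h
    rw [AchCause]
    refine ⟨2, by omega, by decide, by decide, ?_, ?_⟩
    · intro k hk1 hk2
      have hk2' : k ≤ 3 := hk2
      interval_cases k <;> decide
    · exact h

lemma L4 (i : ℕ) : AchCause l4 T0 ψ4 i ↔ i = 0 := by
  constructor
  · intro h
    rw [AchCause] at h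
    obtain ⟨j, h1, h2, hnot, hall, hc⟩ := h
    have h2' : j ≤ 1 := h2
    interval_cases j
    rcases hc with hc | hc
    · exact hc
    · exact absurd hc (Lnil _ _ _)
  · rintro rfl
    rw [AchCause]
    refine ⟨1, le_rfl, by decide, by decide, ?_, Or.inl rfl⟩
    intro k hk1 hk2
    have hk2' : k ≤ 1 := hk2
    interval_cases k <;> decide



/-- σ3 is executable from T0, the quantified effect Φ (two distinct
damaged cars) is false after the first `k` actions for every `k ≤ 6` and true for
`k = 7` and `k = 8`, and the achievement-cause indices of ⟨σ3, T0, Φ⟩ are exactly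
{0, 1, 3, 5, 6}. -/
theorem achCause_sigma3_two_cars :
    executable σ3 T0 ∧
    (∀ k : ℕ, k ≤ 6 → ¬ Φ (run (σ3.take k) T0)) ∧
    Φ (run (σ3.take 7) T0) ∧ Φ (run (σ3.take 8) T0) ∧
    (∀ i : ℕ, AchCause σ3 T0 Φ i ↔ i ∈ ({0, 1, 3, 5, 6} : Set ℕ)) := by
  refine ⟨by intro k; fin_cases k <;> decide, by decide, by decide, by decide, ?_⟩
  intro i
  rw [L0, L1, L2, L3, L4]
  simp only [Set.mem_insert_iff, Set.mem_singleton_iff]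
  tauto
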